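/- Let $A$ be a unital C*-algebra and $u \in A$ a contraction such that for every $x \in A$ with $\|x\| \le 1$, both $\|[u\ \ x]\|^2 \ge 1 + \|x\|^2$ and $\left\|\begin{pmatrix} u \\ x \end{pmatrix}\right\|^2 \ge 1 + \|x\|^2$ hold (equivalently, $\min\{\|[u\ x]\|^2, \|\binom{u}{x}\|^2\} - \|x\|^2 \ge 1$ for all contractions $x$). Then $u$ is a unitary. -/

import Mathlib

noncomputable def cornerHom {A C : Type*} [CStarAlgebra A] [CStarAlgebra C]
    (π : Matrix (Fin 2) (Fin 2) A →⋆ₐ[ℂ] C) : A →⋆ₙₐ[ℂ] C where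
  toFun a := π !![a, 0; 0, 0]
  map_add' a b := by
    rw [← _root_.map_add π]
    exact congrArg π (by ext i j; fin_cases i <;> fin_cases j <;> simp)
  map_zero' := by
    show π !![(0:A),0;0,0] = 0
    rw [show (!![(0:A),0;0,0] : Matrix (Fin 2) (Fin 2) A) = 0 by
      ext i j; fin_cases i <;> fin_cases j <;> simp]
    exact map_zero π
  map_mul' a b := by
    show π _ = π _ * π _
    rw [← _root_.map_mul π]
    exact congrArg π (by rw [Matrix.mul_fin_two]; ext i j; fin_cases i <;> fin_cases j <;> simp)
  map_smul' c a := by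
    show π _ = c • π _
    rw [← _root_.map_smul π]
    exact congrArg π (by ext i j; fin_cases i <;> fin_cases j <;> simp)
  map_star' a := by
    show π _ = star (π _)
    rw [← map_star π]
    exact congrArg π (by ext i j; fin_cases i <;> fin_cases j <;> simp [Matrix.conjTranspose_apply])

theorem corner_norm {A C : Type*} [CStarAlgebra A] [CStarAlgebra C]
    (π : Matrix (Fin 2) (Fin 2) A →⋆ₐ[ℂ] C) (hπ : Function.Injective π) (a : A) :
    ‖π !![a, 0; 0, 0]‖ = ‖a‖ := by
  have hinj : Function.Injective (cornerHom π) := by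
    intro x y hxy
    have := hπ hxy
    simpa using congrFun (congrFun this 0) 0
  exact NonUnitalStarAlgHom.norm_map (cornerHom π) hinj a

/-- If a contraction `u` in a unital C*-algebra `A` satisfies, for every contraction
`x ∈ A`, both `‖[u x]‖² ≥ 1 + ‖x‖²` (row, realized as `!![u, x; 0, 0]`) and
`‖(u; x)‖² ≥ 1 + ‖x‖²` (column, realized as `!![u, 0; x, 0]`), then `u` is a unitary.
The C*-norm on `M₂(A)` is computed via a faithful ⋆-representation `π`
(automatically isometric). -/
theorem contraction_is_unitary_of_norms {A C : Type*} [CStarAlgebra A] [CStarAlgebra C]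
    (u : A) (hu : ‖u‖ ≤ 1)
    (π : Matrix (Fin 2) (Fin 2) A →⋆ₐ[ℂ] C) (hπ : Function.Injective π)
    (h : ∀ x : A, ‖x‖ ≤ 1 →
      1 + ‖x‖ ^ 2 ≤ ‖π !![u, x; 0, 0]‖ ^ 2 ∧ 1 + ‖x‖ ^ 2 ≤ ‖π !![u, 0; x, 0]‖ ^ 2) :
    u ∈ unitary A := by
  rcases subsingleton_or_nontrivial A with hA | hA
  · exact Unitary.mem_iff.mpr ⟨Subsingleton.elim _ _, Subsingleton.elim _ _⟩
  letI := CStarAlgebra.spectralOrder A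
  haveI := CStarAlgebra.spectralOrderedRing A
  rw [Unitary.mem_iff]
  constructor
  · -- star u * u = 1, via the column inequality
    have hnn : (0:A) ≤ 1 - star u * u := by
      rw [sub_nonneg]
      exact (CStarAlgebra.norm_le_one_iff_of_nonneg _ (star_mul_self_nonneg u)).mp
        (by rw [CStarRing.norm_star_mul_self]; nlinarith [norm_nonneg u])
    set x := CFC.sqrt (1 - star u * u) with hxdef
    have hxnn : 0 ≤ x := CFC.sqrt_nonneg _
    have hxsa : star x = x := hxnn.isSelfAdjoint.star_eq
    have hxx : star x * x = 1 - star u * u := by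
      rw [hxsa, ← sq, CFC.sq_sqrt _ hnn]
    have hxle : ‖x‖ ≤ 1 := by
      rw [← sq_le_one_iff₀ (norm_nonneg x), sq, ← CStarRing.norm_star_mul_self, hxx]
      exact (CStarAlgebra.norm_le_one_iff_of_nonneg _ hnn).mpr
        (sub_le_self 1 (star_mul_self_nonneg u))
    have hM : star (!![u,0;x,0] : Matrix (Fin 2) (Fin 2) A) * !![u,0;x,0]
        = !![(1:A),0;0,0] := by
      ext i j
      fin_cases i <;> fin_cases j <;>
        simp [Matrix.star_eq_conjTranspose, Matrix.mul_apply, Fin.sum_univ_two,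
          Matrix.conjTranspose_apply, hxx]
    have hnorm : ‖π !![u,0;x,0]‖ ^ 2 = 1 := by
      rw [sq, ← CStarRing.norm_star_mul_self, ← map_star π, ← _root_.map_mul π, hM,
        corner_norm π hπ, norm_one]
    have hineq := (h x hxle).2
    rw [hnorm] at hineq
    have hx0 : x = 0 := by
      rw [← norm_eq_zero]
      nlinarith [norm_nonneg x]
    have := (CFC.sqrt_eq_zero_iff (1 - star u * u) hnn).mp hx0
    rw [sub_eq_zero] at this
    exact this.symm
  · -- u * star u = 1, via the row inequality
    have hnn : (0:A) ≤ 1 - u * star u := by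
      rw [sub_nonneg]
      exact (CStarAlgebra.norm_le_one_iff_of_nonneg _ (mul_star_self_nonneg u)).mp
        (by rw [CStarRing.norm_self_mul_star]; nlinarith [norm_nonneg u])
    set x := CFC.sqrt (1 - u * star u) with hxdef
    have hxnn : 0 ≤ x := CFC.sqrt_nonneg _
    have hxsa : star x = x := hxnn.isSelfAdjoint.star_eq
    have hxx : x * star x = 1 - u * star u := by
      rw [hxsa, ← sq, CFC.sq_sqrt _ hnn]
    have hxle : ‖x‖ ≤ 1 := by
      rw [← sq_le_one_iff₀ (norm_nonneg x), sq, ← CStarRing.norm_self_mul_star, hxx]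
      exact (CStarAlgebra.norm_le_one_iff_of_nonneg _ hnn).mpr
        (sub_le_self 1 (mul_star_self_nonneg u))
    have hM : (!![u,x;0,0] : Matrix (Fin 2) (Fin 2) A) * star !![u,x;0,0]
        = !![(1:A),0;0,0] := by
      ext i j
      fin_cases i <;> fin_cases j <;>
        simp [Matrix.star_eq_conjTranspose, Matrix.mul_apply, Fin.sum_univ_two,
          Matrix.conjTranspose_apply, hxx]
    have hnorm : ‖π !![u,x;0,0]‖ ^ 2 = 1 := by
      rw [sq, ← CStarRing.norm_self_mul_star, ← map_star π, ← _root_.map_mul π, hM,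
        corner_norm π hπ, norm_one]
    have hineq := (h x hxle).1
    rw [hnorm] at hineq
    have hx0 : x = 0 := by
      rw [← norm_eq_zero]
      nlinarith [norm_nonneg x]
    have := (CFC.sqrt_eq_zero_iff (1 - u * star u) hnn).mp hx0
    rw [sub_eq_zero] at this
    exact this.symm
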